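/- A positive sentence holds in a structure M if and only if it holds in some (equivalently, every) prime power of M. -/

import Mathlib

namespace PosLogic

open FirstOrder FirstOrder.Language FirstOrder.Language.Structure Set

universe u v w x y z

variable {L : FirstOrder.Language.{u, v}}

/-- Positive formulas: built from atomic formulas and `⊥` using `∧`, `∨` and `∃`. -/
inductive PosFormula (L : FirstOrder.Language.{u, v}) (α : Type y) : ℕ → Type (max u v y)
  | falsum {n : ℕ} : PosFormula L α n
  | equal {n : ℕ} (t₁ t₂ : L.Term (α ⊕ Fin n)) : PosFormula L α n
  | rel {n l : ℕ} (R : L.Relations l) (ts : Fin l → L.Term (α ⊕ Fin n)) : PosFormula L α n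
  | and {n : ℕ} (φ ψ : PosFormula L α n) : PosFormula L α n
  | or {n : ℕ} (φ ψ : PosFormula L α n) : PosFormula L α n
  | ex {n : ℕ} (φ : PosFormula L α (n + 1)) : PosFormula L α n

variable {α : Type y}

/-- Realization (satisfaction) of a positive formula. -/
def PosFormula.Realize {M : Type w} [L.Structure M] :
    ∀ {n : ℕ}, PosFormula L α n → (α → M) → (Fin n → M) → Prop
  | _, .falsum, _, _ => False
  | _, .equal t₁ t₂, v, xs => t₁.realize (Sum.elim v xs) = t₂.realize (Sum.elim v xs)
  | _, .rel R ts, v, xs => RelMap R fun i => (ts i).realize (Sum.elim v xs)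
  | _, .and φ ψ, v, xs => φ.Realize v xs ∧ ψ.Realize v xs
  | _, .or φ ψ, v, xs => φ.Realize v xs ∨ ψ.Realize v xs
  | _, .ex φ, v, xs => ∃ a, φ.Realize v (Fin.snoc xs a)

/-- Positive sentences. -/
abbrev PosSentence (L : FirstOrder.Language.{u, v}) : Type (max u v) := PosFormula L Empty 0

/-- A positive sentence holds in a structure. -/
def PosSentence.Realize (M : Type w) [L.Structure M] (φ : PosSentence L) : Prop :=
  PosFormula.Realize (M := M) φ Empty.elim (fun i => i.elim0)

/-- Two structures are positively equivalent when they satisfy the same positive sentences. -/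
def PosEquivalent (M : Type w) (N : Type x) [L.Structure M] [L.Structure N] : Prop :=
  ∀ φ : PosSentence L, PosSentence.Realize M φ ↔ PosSentence.Realize N φ

/-- A filter over a poset: a nonempty collection of upsets, upward closed among upsets and
closed under binary intersections. -/
structure PosetFilter (X : Type x) [Preorder X] where
  sets : Set (Set X)
  upper' : ∀ V ∈ sets, IsUpperSet V
  nonempty' : sets.Nonempty
  mono' : ∀ V ∈ sets, ∀ W : Set X, IsUpperSet W → V ⊆ W → W ∈ sets
  inter' : ∀ V ∈ sets, ∀ W ∈ sets, V ∩ W ∈ sets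

/-- A prime filter over a poset. -/
def PosetFilter.Prime {X : Type x} [Preorder X] (F : PosetFilter X) : Prop :=
  ∅ ∉ F.sets ∧ ∀ V W : Set X, IsUpperSet V → IsUpperSet W →
    V ∪ W ∈ F.sets → V ∈ F.sets ∨ W ∈ F.sets

/-- Predicate version: `S` is a filter over the poset `X`. -/
def IsPosetFilter {X : Type x} [Preorder X] (S : Set (Set X)) : Prop :=
  (∀ V ∈ S, IsUpperSet V) ∧ S.Nonempty ∧
    (∀ V ∈ S, ∀ W : Set X, IsUpperSet W → V ⊆ W → W ∈ S) ∧
    (∀ V ∈ S, ∀ W ∈ S, V ∩ W ∈ S)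

/-- Predicate version: `S` is a prime filter over the poset `X`. -/
def IsPrimePosetFilter {X : Type x} [Preorder X] (S : Set (Set X)) : Prop :=
  IsPosetFilter S ∧ ∅ ∉ S ∧ ∀ V W : Set X, IsUpperSet V → IsUpperSet W →
    V ∪ W ∈ S → V ∈ S ∨ W ∈ S

/-- A wellfounded forest: a poset whose principal downsets are well ordered. -/
def IsWellFoundedForest (X : Type x) [Preorder X] : Prop :=
  ∀ a : X, IsWellOrder (Set.Iic a) (· < ·)

/-- An ordered system of structures indexed by a poset. -/
structure OrderedSystem (L : FirstOrder.Language.{u, v}) (X : Type x) [Preorder X]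
    (M : X → Type w) [∀ a, L.Structure (M a)] where
  hom : ∀ ⦃a b : X⦄, a ≤ b → M a →[L] M b
  hom_id : ∀ (a : X) (m : M a), hom (le_refl a) m = m
  hom_comp : ∀ ⦃a b c : X⦄ (hab : a ≤ b) (hbc : b ≤ c) (m : M a),
    hom hbc (hom hab m) = hom (hab.trans hbc) m

variable {X : Type x} [PartialOrder X] {M : X → Type w} [∀ a, L.Structure (M a)]

/-- A compatible family in `S_F`: an element of `S_V` for some `V ∈ F`. -/
structure CompFam (D : OrderedSystem L X M) (F : PosetFilter X) where
  dom : Set X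
  dom_mem : dom ∈ F.sets
  val : ∀ a ∈ dom, M a
  compat : ∀ ⦃b c : X⦄ (hb : b ∈ dom) (hc : c ∈ dom) (hbc : b ≤ c),
    D.hom hbc (val b hb) = val c hc

variable {D : OrderedSystem L X M} {F : PosetFilter X}

/-- The set `⟦a = b⟧`. -/
def eqSet (a b : CompFam D F) : Set X :=
  {p | ∃ (ha : p ∈ a.dom) (hb : p ∈ b.dom), a.val p ha = b.val p hb}

theorem eqSet_upper (a b : CompFam D F) : IsUpperSet (eqSet a b) := by
  rintro p q hpq ⟨ha, hb, he⟩
  have hap := F.upper' _ a.dom_mem hpq ha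
  have hbp := F.upper' _ b.dom_mem hpq hb
  exact ⟨hap, hbp, by rw [← a.compat ha hap hpq, ← b.compat hb hbp hpq, he]⟩

/-- The relation `≡_F`. -/
instance CompFam.setoid (D : OrderedSystem L X M) (F : PosetFilter X) :
    Setoid (CompFam D F) where
  r a b := eqSet a b ∈ F.sets
  iseqv := by
    constructor
    · intro a
      exact F.mono' _ a.dom_mem _ (eqSet_upper a a) (fun p hp => ⟨hp, hp, rfl⟩)
    · intro a b h
      refine F.mono' _ h _ (eqSet_upper b a) ?_
      rintro p ⟨ha, hb, he⟩
      exact ⟨hb, ha, he.symm⟩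
    · intro a b c hab hbc
      refine F.mono' _ (F.inter' _ hab _ hbc) _ (eqSet_upper a c) ?_
      rintro p ⟨⟨ha, hb, h1⟩, hb', hc, h2⟩
      exact ⟨ha, hc, h1.trans h2⟩

theorem PosetFilter.univ_mem (F : PosetFilter X) : Set.univ ∈ F.sets := by
  obtain ⟨V, hV⟩ := F.nonempty'
  exact F.mono' _ hV _ isUpperSet_univ (Set.subset_univ V)

theorem PosetFilter.iInter_mem (F : PosetFilter X) :
    ∀ {n : ℕ} (s : Fin n → Set X), (∀ i, s i ∈ F.sets) → (⋂ i, s i) ∈ F.sets := by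
  intro n
  induction n with
  | zero =>
    intro s _
    rw [Set.iInter_of_empty]
    exact F.univ_mem
  | succ k ih =>
    intro s hs
    have he : (⋂ i, s i) = s 0 ∩ ⋂ i : Fin k, s i.succ := by
      ext p
      simp only [Set.mem_iInter, Set.mem_inter_iff, Fin.forall_fin_succ]
    rw [he]
    exact F.inter' _ (hs 0) _ (ih _ fun i => hs i.succ)

/-- Pointwise application of a function symbol to compatible families. -/
def CompFam.app {n : ℕ} (g : L.Functions n) (a : Fin n → CompFam D F) : CompFam D F where
  dom := ⋂ i, (a i).dom
  dom_mem := F.iInter_mem _ fun i => (a i).dom_mem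
  val p hp := funMap g fun i => (a i).val p (Set.mem_iInter.1 hp i)
  compat := by
    intro b c hb hc hbc
    rw [Hom.map_fun]
    congr 1
    funext i
    exact (a i).compat _ _ hbc

/-- The set `⟦R(a₁, …, aₙ)⟧`. -/
def relSet {n : ℕ} (R : L.Relations n) (a : Fin n → CompFam D F) : Set X :=
  {p | ∃ h : ∀ i, p ∈ (a i).dom, RelMap R fun i => (a i).val p (h i)}

/-- The set `⟦φ(a₁, …, aₙ)⟧` for a positive formula `φ`. -/
def posSet {n : ℕ} (φ : PosFormula L Empty n) (a : Fin n → CompFam D F) : Set X :=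
  {p | ∃ h : ∀ i, p ∈ (a i).dom,
    PosFormula.Realize φ Empty.elim fun i => (a i).val p (h i)}

/-- The filter product of an ordered system with respect to a filter over the index poset. -/
def FilterProd (D : OrderedSystem L X M) (F : PosetFilter X) : Type (max x w) :=
  Quotient (CompFam.setoid D F)

noncomputable instance FilterProd.structure : L.Structure (FilterProd D F) where
  funMap {n} g v :=
    Quotient.mk (CompFam.setoid D F) (CompFam.app g fun i => (v i).out)
  RelMap {n} R v :=
    ∃ a : Fin n → CompFam D F,
      (∀ i, Quotient.mk (CompFam.setoid D F) (a i) = v i) ∧ relSet R a ∈ F.sets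

/-- `(N, g)` is a direct limit (colimit) cocone of the ordered system `D`. -/
structure IsDirectLimitCocone {X : Type x} [Preorder X] {M : X → Type w}
    [∀ a, L.Structure (M a)] (D : OrderedSystem L X M)
    (N : Type z) [L.Structure N] (g : ∀ a, M a →[L] N) : Prop where
  compat : ∀ ⦃a b : X⦄ (hab : a ≤ b) (m : M a), g b (D.hom hab m) = g a m
  universal : ∀ (P : Type (max x w z)) [L.Structure P] (h : ∀ a, M a →[L] P),
    (∀ ⦃a b : X⦄ (hab : a ≤ b) (m : M a), h b (D.hom hab m) = h a m) →
    ∃! k : N →[L] P, ∀ (a : X) (m : M a), k (g a m) = h a m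

/-- A chain of structures: an ordered system indexed by a nonempty well ordered poset. -/
structure ChainSystem (L : FirstOrder.Language.{u, v}) where
  X : Type w
  [lo : LinearOrder X]
  [ne : Nonempty X]
  wf : WellFoundedLT X
  Mi : X → Type w
  [str : ∀ a, L.Structure (Mi a)]
  sys : OrderedSystem L X Mi

attribute [instance] ChainSystem.lo ChainSystem.ne ChainSystem.str

/-- An ordered system indexed by a wellfounded forest, together with a prime filter. -/
structure PrimeSystem (L : FirstOrder.Language.{u, v}) where
  X : Type w
  [po : PartialOrder X]
  forest : IsWellFoundedForest X
  Mi : X → Type w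
  [str : ∀ a, L.Structure (Mi a)]
  sys : OrderedSystem L X Mi
  F : PosetFilter X
  prime : F.Prime

attribute [instance] PrimeSystem.po PrimeSystem.str

/-- The ultrapower `M^ι/u`. -/
def Ultrapower (M : Type w) (ι : Type z) (u : Ultrafilter ι) :
    Type (max w z) :=
  (↑u : Filter ι).Product fun _ => M

noncomputable instance Ultrapower.structure (M : Type w) [L.Structure M] (ι : Type z)
    (u : Ultrafilter ι) : L.Structure (Ultrapower M ι u) :=
  inferInstanceAs (L.Structure ((↑u : Filter ι).Product fun _ => M))

/-- A prime power of the structure `N`: a prime product of an ordered system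
all of whose structures are `N`. -/
structure PrimePowerOf (L : FirstOrder.Language.{u, v}) (N : Type w) [L.Structure N] where
  X : Type x
  [po : PartialOrder X]
  forest : IsWellFoundedForest X
  sys : OrderedSystem L X fun _ => N
  F : PosetFilter X
  prime : F.Prime

attribute [instance] PrimePowerOf.po

/-- The carrier of a prime power. -/
def PrimePowerOf.carrier {N : Type w} [L.Structure N] (p : PrimePowerOf L N) :
    Type (max x w) :=
  FilterProd p.sys p.F

noncomputable instance {N : Type w} [L.Structure N] (p : PrimePowerOf L N) :
    L.Structure p.carrier :=
  inferInstanceAs (L.Structure (FilterProd p.sys p.F))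

/-- Basic h-inductive sentences: universal closures of implications between
positive formulas. -/
structure BasicHInd (L : FirstOrder.Language.{u, v}) : Type (max u v) where
  n : ℕ
  lhs : PosFormula L Empty n
  rhs : PosFormula L Empty n

/-- Satisfaction of a basic h-inductive sentence. -/
def BasicHInd.Realize (φ : BasicHInd L) (M : Type w) [L.Structure M] : Prop :=
  ∀ xs : Fin φ.n → M, φ.lhs.Realize Empty.elim xs → φ.rhs.Realize Empty.elim xs

/-- Satisfaction of an h-inductive theory (a set of h-inductive sentences). -/
def ModelsHInd (M : Type w) [L.Structure M] (T : Set (BasicHInd L)) : Prop :=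
  ∀ φ ∈ T, φ.Realize M

/-- An immersion: a map preserving and reflecting all positive formulas. -/
def IsImmersion {M : Type w} {N : Type x} [L.Structure M] [L.Structure N]
    (f : N → M) : Prop :=
  ∀ {n : ℕ} (φ : PosFormula L Empty n) (xs : Fin n → N),
    PosFormula.Realize φ Empty.elim xs ↔ PosFormula.Realize φ Empty.elim (f ∘ xs)

/-- A positively existentially closed model of an h-inductive theory `T`. -/
def IsPec (T : Set (BasicHInd L)) (M : Type w) [L.Structure M] : Prop :=
  ModelsHInd M T ∧ ∀ (P : Type w) [L.Structure P], ModelsHInd P T →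
    ∀ f : M →[L] P, IsImmersion (L := L) (⇑f : M → P)

/-- Positive `κ`-saturation. -/
def PositivelySaturatedAt (M : Type w) [L.Structure M] (κ : Cardinal.{w}) : Prop :=
  ∀ (γ : Type w) (vp : γ → M), Cardinal.mk γ < κ →
    ∀ (n : ℕ) (p : Set (PosFormula L γ n)),
      (∀ s : Finset (PosFormula L γ n), ↑s ⊆ p →
        ∃ xs : Fin n → M, ∀ φ ∈ s, PosFormula.Realize φ vp xs) →
      ∃ xs : Fin n → M, ∀ φ ∈ p, PosFormula.Realize φ vp xs

/-- Positive saturation: positive `|M|`-saturation. -/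
def PositivelySaturated (M : Type w) [L.Structure M] : Prop :=
  PositivelySaturatedAt (L := L) M (Cardinal.mk M)


/-!
Łoś's theorem holds for positive formulas in a prime product over a wellfounded forest: a
positive formula holds of the classes of compatible families exactly when the upset of points
where it holds pointwise belongs to the filter. Primality of the filter handles `∨`. For `∃`,
witnesses chosen pointwise on an upset `V` are made compatible by pushing forward, to each point
`p`, the witness at the least point of `V` below `p`; comparable points share that least point
because principal downsets are well ordered. For a sentence in a power of `M` the upset is
everything or nothing according to whether `M` satisfies it, and a one-point forest carries a
prime power of `M`.
-/

theorem PosFormula.realize_hom_comp {N P : Type*} [L.Structure N] [L.Structure P]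
    (f : N →[L] P) {n : ℕ} (ψ : PosFormula L α n) {v : α → N} {xs : Fin n → N}
    (h : ψ.Realize v xs) : ψ.Realize (f ∘ v) (f ∘ xs) := by
  induction ψ with
  | falsum => exact h.elim
  | equal t₁ t₂ =>
    simp only [PosFormula.Realize, ← Sum.comp_elim, HomClass.realize_term] at h ⊢
    rw [h]
  | rel R ts =>
    simp only [PosFormula.Realize, ← Sum.comp_elim, HomClass.realize_term] at h ⊢
    exact f.map_rel R _ h
  | and φ ψ ihφ ihψ => exact ⟨ihφ h.1, ihψ h.2⟩
  | or φ ψ ihφ ihψ => exact h.imp ihφ ihψ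
  | ex φ ih =>
    obtain ⟨m, hm⟩ := h
    exact ⟨f m, by simpa only [Fin.comp_snoc] using ih hm⟩

theorem PosFormula.realize_hom {N P : Type*} [L.Structure N] [L.Structure P]
    (f : N →[L] P) {n : ℕ} (ψ : PosFormula L Empty n) {xs : Fin n → N}
    (h : ψ.Realize Empty.elim xs) : ψ.Realize Empty.elim (f ∘ xs) := by
  simpa only [Subsingleton.elim (f ∘ Empty.elim) Empty.elim] using ψ.realize_hom_comp f h

theorem PosetFilter.inter_mem_iff (F : PosetFilter X) {V W : Set X} (hV : IsUpperSet V)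
    (hW : IsUpperSet W) : V ∩ W ∈ F.sets ↔ V ∈ F.sets ∧ W ∈ F.sets :=
  ⟨fun h => ⟨F.mono' _ h V hV inter_subset_left, F.mono' _ h W hW inter_subset_right⟩,
    fun h => F.inter' V h.1 W h.2⟩

theorem PosetFilter.Prime.union_mem_iff {F : PosetFilter X} (hF : F.Prime) {V W : Set X}
    (hV : IsUpperSet V) (hW : IsUpperSet W) : V ∪ W ∈ F.sets ↔ V ∈ F.sets ∨ W ∈ F.sets :=
  ⟨hF.2 V W hV hW, fun h => h.elim (fun hV' => F.mono' _ hV' _ (hV.union hW) subset_union_left)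
    (fun hW' => F.mono' _ hW' _ (hV.union hW) subset_union_right)⟩

theorem IsWellFoundedForest.exists_isLeast (forest : IsWellFoundedForest X) {V : Set X} {p : X}
    (hp : p ∈ V) : ∃ m, IsLeast {q | q ∈ V ∧ q ≤ p} m := by
  have := forest p
  have hwf : WellFounded ((· < ·) : Iic p → Iic p → Prop) := (forest p).wf
  let S : Set (Iic p) := {q | ↑q ∈ V}
  have hS : S.Nonempty := ⟨⟨p, le_rfl⟩, hp⟩
  set m := hwf.min S hS
  refine ⟨m, ⟨hwf.min_mem S hS, m.2⟩, fun q ⟨hqV, hqp⟩ => ?_⟩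
  rcases trichotomous_of (· < ·) m ⟨q, hqp⟩ with h | h | h
  · exact h.le
  · exact (congrArg Subtype.val h).le
  · exact (hwf.not_lt_min S (show (⟨q, hqp⟩ : Iic p) ∈ S from hqV) h).elim

theorem IsWellFoundedForest.exists_compFam (forest : IsWellFoundedForest X) {V : Set X}
    (hV : V ∈ F.sets) (P : ∀ p, M p → Prop)
    (hP : ∀ ⦃p q : X⦄ (hpq : p ≤ q) (m : M p), P p m → P q (D.hom hpq m))
    (hex : ∀ p ∈ V, ∃ m, P p m) : ∃ b : CompFam D F, ∀ p hp, P p (b.val p hp) := by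
  choose w hw using hex
  choose μ hμ using fun p (hp : p ∈ V) => forest.exists_isLeast hp
  have hμV p hp : μ p hp ∈ V := (hμ p hp).1.1
  have hμle p hp : μ p hp ≤ p := (hμ p hp).1.2
  have hμeq {p q} (hp : p ∈ V) (hq : q ∈ V) (hpq : p ≤ q) : μ p hp = μ q hq := by
    have h₁ : μ q hq ≤ μ p hp := (hμ q hq).2 ⟨hμV p hp, (hμle p hp).trans hpq⟩
    exact le_antisymm ((hμ p hp).2 ⟨hμV q hq, h₁.trans (hμle p hp)⟩) h₁
  have hom_eq {r r' q : X} (e : r = r') (hr : r ∈ V) (hr' : r' ∈ V) (l : r ≤ q) (l' : r' ≤ q) :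
      D.hom l (w r hr) = D.hom l' (w r' hr') := by
    subst e; rfl
  refine ⟨⟨V, hV, fun p hp => D.hom (hμle p hp) (w _ (hμV p hp)), ?_⟩, ?_⟩
  · intro p q hp hq hpq
    rw [D.hom_comp]
    exact hom_eq (hμeq hp hq hpq) _ _ _ _
  · exact fun p hp => hP (hμle p hp) _ (hw _ (hμV p hp))

theorem CompFam.dom_isUpperSet (a : CompFam D F) : IsUpperSet a.dom :=
  F.upper' _ a.dom_mem

theorem CompFam.hom_comp_val {n : ℕ} (a : Fin n → CompFam D F) {p q : X} (hpq : p ≤ q)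
    (h : ∀ i, p ∈ (a i).dom) :
    D.hom hpq ∘ (fun i => (a i).val p (h i)) =
      fun i => (a i).val q ((a i).dom_isUpperSet hpq (h i)) :=
  funext fun i => (a i).compat _ _ hpq

def CompFam.realizeTerm {n : ℕ} (t : L.Term (Empty ⊕ Fin n)) (a : Fin n → CompFam D F) :
    CompFam D F where
  dom := ⋂ i, (a i).dom
  dom_mem := F.iInter_mem _ fun i => (a i).dom_mem
  val p hp := t.realize (Sum.elim Empty.elim fun i => (a i).val p (mem_iInter.1 hp i))
  compat p q hp hq hpq := by
    rw [← HomClass.realize_term, Sum.comp_elim, Subsingleton.elim (_ ∘ Empty.elim) Empty.elim,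
      CompFam.hom_comp_val]

theorem isUpperSet_setOf_forall_mem_dom {n : ℕ} (a : Fin n → CompFam D F)
    (P : ∀ p, (Fin n → M p) → Prop)
    (hP : ∀ ⦃p q : X⦄ (hpq : p ≤ q) (xs : Fin n → M p), P p xs → P q (D.hom hpq ∘ xs)) :
    IsUpperSet {p | ∃ h : ∀ i, p ∈ (a i).dom, P p fun i => (a i).val p (h i)} := by
  rintro p q hpq ⟨h, hPp⟩
  exact ⟨_, CompFam.hom_comp_val a hpq h ▸ hP hpq _ hPp⟩

theorem posSet_isUpperSet {n : ℕ} (ψ : PosFormula L Empty n) (a : Fin n → CompFam D F) :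
    IsUpperSet (posSet ψ a) :=
  isUpperSet_setOf_forall_mem_dom a _ fun _ _ hpq _ h => ψ.realize_hom (D.hom hpq) h

theorem relSet_isUpperSet {n : ℕ} (R : L.Relations n) (a : Fin n → CompFam D F) :
    IsUpperSet (relSet R a) :=
  isUpperSet_setOf_forall_mem_dom a _ fun _ _ hpq _ h => (D.hom hpq).map_rel R _ h

def FilterProd.mk (a : CompFam D F) : FilterProd D F :=
  Quotient.mk _ a

namespace FilterProd

theorem mk_eq_mk {a b : CompFam D F} : mk a = mk b ↔ eqSet a b ∈ F.sets :=
  Quotient.eq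

theorem mk_eq_mk_of_subset {a b : CompFam D F} {W : Set X} (hW : W ∈ F.sets)
    (h : W ⊆ eqSet a b) : mk a = mk b :=
  mk_eq_mk.2 (F.mono' W hW _ (eqSet_upper a b) h)

theorem funMap_mk {n : ℕ} (g : L.Functions n) (a : Fin n → CompFam D F) :
    funMap g (fun i => mk (a i)) = mk (CompFam.app g a) := by
  have hout i : eqSet (Quotient.out (mk (a i))) (a i) ∈ F.sets :=
    Quotient.exact (Quotient.out_eq (mk (a i)))
  refine mk_eq_mk_of_subset (F.iInter_mem _ hout) fun p hp => ?_
  choose h₁ h₂ he using mem_iInter.1 hp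
  exact ⟨mem_iInter.2 h₁, mem_iInter.2 h₂, congrArg (funMap g) (funext he)⟩

theorem realize_term_mk {n : ℕ} (t : L.Term (Empty ⊕ Fin n)) (a : Fin n → CompFam D F) :
    t.realize (Sum.elim Empty.elim fun i => mk (a i)) = mk (CompFam.realizeTerm t a) := by
  have hdom : (⋂ j, (a j).dom) ∈ F.sets := F.iInter_mem _ fun j => (a j).dom_mem
  induction t with
  | var z =>
    rcases z with e | i
    · exact e.elim
    · exact mk_eq_mk_of_subset hdom fun p hp => ⟨mem_iInter.1 hp i, hp, rfl⟩
  | func g ts ih =>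
    simp only [Term.realize, ih, funMap_mk]
    exact mk_eq_mk_of_subset hdom fun p hp => ⟨mem_iInter.2 fun _ => hp, hp, rfl⟩

theorem relMap_mk {n : ℕ} (R : L.Relations n) (c : Fin n → CompFam D F) :
    RelMap R (fun i => mk (c i)) ↔ relSet R c ∈ F.sets := by
  refine ⟨fun ⟨b, hb, hR⟩ => ?_, fun h => ⟨c, fun _ => rfl, h⟩⟩
  have hbc i : eqSet (b i) (c i) ∈ F.sets := mk_eq_mk.1 (hb i)
  refine F.mono' _ (F.inter' _ hR _ (F.iInter_mem _ hbc)) _ (relSet_isUpperSet R c) ?_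
  rintro p ⟨⟨_, hRp⟩, hpe⟩
  choose h₁ h₂ he using mem_iInter.1 hpe
  exact ⟨h₂, by simpa only [he] using hRp⟩

end FilterProd

section posSet

variable {n : ℕ} (a : Fin n → CompFam D F)

theorem posSet_falsum : posSet (.falsum : PosFormula L Empty n) a = ∅ := by
  ext p
  simp [posSet, PosFormula.Realize]

theorem posSet_equal (t₁ t₂ : L.Term (Empty ⊕ Fin n)) :
    posSet (.equal t₁ t₂) a =
      eqSet (CompFam.realizeTerm t₁ a) (CompFam.realizeTerm t₂ a) := by
  ext p
  simp [posSet, eqSet, CompFam.realizeTerm, PosFormula.Realize]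

theorem posSet_rel {l : ℕ} (R : L.Relations l) (ts : Fin l → L.Term (Empty ⊕ Fin n)) :
    posSet (.rel R ts) a =
      relSet R (fun i => CompFam.realizeTerm (ts i) a) ∩ ⋂ j, (a j).dom := by
  ext p
  constructor
  · rintro ⟨h, hR⟩
    exact ⟨⟨fun _ => mem_iInter.2 h, hR⟩, mem_iInter.2 h⟩
  · rintro ⟨⟨_, hR⟩, hp⟩
    exact ⟨mem_iInter.1 hp, hR⟩

theorem posSet_and (φ ψ : PosFormula L Empty n) :
    posSet (.and φ ψ) a = posSet φ a ∩ posSet ψ a := by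
  ext p
  constructor
  · rintro ⟨h, hφ, hψ⟩
    exact ⟨⟨h, hφ⟩, h, hψ⟩
  · rintro ⟨⟨h, hφ⟩, _, hψ⟩
    exact ⟨h, hφ, hψ⟩

theorem posSet_or (φ ψ : PosFormula L Empty n) :
    posSet (.or φ ψ) a = posSet φ a ∪ posSet ψ a :=
  ext fun _ => exists_or

theorem mem_posSet_snoc (ψ : PosFormula L Empty (n + 1)) (b : CompFam D F) {p : X} :
    p ∈ posSet ψ (Fin.snoc a b) ↔ ∃ (ha : ∀ i, p ∈ (a i).dom) (hb : p ∈ b.dom),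
      ψ.Realize Empty.elim (Fin.snoc (fun i => (a i).val p (ha i)) (b.val p hb)) := by
  have hval (h : ∀ i, p ∈ (Fin.snoc (α := fun _ => CompFam D F) a b i).dom)
      (ha : ∀ i, p ∈ (a i).dom) (hb : p ∈ b.dom) :
      (fun i => (Fin.snoc (α := fun _ => CompFam D F) a b i).val p (h i)) =
        Fin.snoc (fun i => (a i).val p (ha i)) (b.val p hb) := by
    funext i
    refine Fin.lastCases ?_ (fun j => ?_) i <;> simp
  constructor
  · rintro ⟨h, hr⟩
    have ha i : p ∈ (a i).dom := by simpa using h i.castSucc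
    have hb : p ∈ b.dom := by simpa using h (Fin.last n)
    exact ⟨ha, hb, hval h ha hb ▸ hr⟩
  · rintro ⟨ha, hb, hr⟩
    have h : ∀ i, p ∈ (Fin.snoc (α := fun _ => CompFam D F) a b i).dom :=
      Fin.lastCases (by simpa) fun j => by simpa using ha j
    exact ⟨h, (hval h ha hb).symm ▸ hr⟩

theorem posSet_snoc_subset_posSet_ex (ψ : PosFormula L Empty (n + 1)) (b : CompFam D F) :
    posSet ψ (Fin.snoc a b) ⊆ posSet (.ex ψ) a := fun _ hp =>
  let ⟨ha, hb, hr⟩ := (mem_posSet_snoc a ψ b).1 hp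
  ⟨ha, b.val _ hb, hr⟩

theorem exists_posSet_snoc_mem (forest : IsWellFoundedForest X) {ψ : PosFormula L Empty (n + 1)}
    (h : posSet (.ex ψ) a ∈ F.sets) : ∃ b, posSet ψ (Fin.snoc a b) ∈ F.sets := by
  obtain ⟨b, hb⟩ := forest.exists_compFam h
    (fun p m => ∃ ha : ∀ i, p ∈ (a i).dom,
      ψ.Realize Empty.elim (Fin.snoc (fun i => (a i).val p (ha i)) m))
    (fun p q hpq m ⟨ha, hr⟩ => ⟨fun i => (a i).dom_isUpperSet hpq (ha i), by
      simpa only [Fin.comp_snoc, CompFam.hom_comp_val] using ψ.realize_hom (D.hom hpq) hr⟩)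
    (fun p ⟨ha, m, hr⟩ => ⟨m, ha, hr⟩)
  refine ⟨b, F.mono' _ b.dom_mem _ (posSet_isUpperSet _ _) fun p hp => ?_⟩
  obtain ⟨ha, hr⟩ := hb p hp
  exact (mem_posSet_snoc a ψ b).2 ⟨ha, hp, hr⟩

end posSet

theorem FilterProd.realize_mk_iff (forest : IsWellFoundedForest X) (hF : F.Prime) {n : ℕ}
    (ψ : PosFormula L Empty n) (a : Fin n → CompFam D F) :
    ψ.Realize Empty.elim (fun i => mk (a i)) ↔ posSet ψ a ∈ F.sets := by
  induction ψ with
  | falsum => simpa [posSet_falsum, PosFormula.Realize] using hF.1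
  | equal t₁ t₂ => simp only [PosFormula.Realize, realize_term_mk, mk_eq_mk, posSet_equal]
  | rel R ts =>
    simp only [PosFormula.Realize, realize_term_mk, relMap_mk, posSet_rel,
      F.inter_mem_iff (relSet_isUpperSet _ _) (isUpperSet_iInter fun j => (a j).dom_isUpperSet),
      F.iInter_mem _ fun j => (a j).dom_mem, and_true]
  | and φ ψ ihφ ihψ =>
    rw [PosFormula.Realize, ihφ, ihψ, posSet_and,
      F.inter_mem_iff (posSet_isUpperSet _ _) (posSet_isUpperSet _ _)]
  | or φ ψ ihφ ihψ =>
    rw [PosFormula.Realize, ihφ, ihψ, posSet_or,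
      hF.union_mem_iff (posSet_isUpperSet _ _) (posSet_isUpperSet _ _)]
  | ex ψ ih =>
    have hsnoc b : (fun i => mk (Fin.snoc a b i)) = Fin.snoc (fun i => mk (a i)) (mk b) :=
      Fin.comp_snoc mk a b
    refine ⟨fun ⟨q, hq⟩ => ?_, fun h => ?_⟩
    · obtain ⟨b, rfl⟩ := Quotient.exists_rep q
      refine F.mono' _ ((ih _).1 ?_) _ (posSet_isUpperSet _ _) (posSet_snoc_subset_posSet_ex a ψ b)
      rw [hsnoc]
      exact hq
    · obtain ⟨b, hb⟩ := exists_posSet_snoc_mem a forest h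
      exact ⟨mk b, hsnoc b ▸ (ih _).2 hb⟩

theorem posSet_elim0 (ψ : PosSentence L) :
    posSet ψ (Fin.elim0 : Fin 0 → CompFam D F) = {p | PosSentence.Realize (M p) ψ} := by
  ext p
  have e (xs : Fin 0 → M p) : PosFormula.Realize ψ Empty.elim xs ↔ PosSentence.Realize (M p) ψ :=
    Iff.of_eq (congrArg _ (Subsingleton.elim _ _))
  exact ⟨fun ⟨_, h⟩ => (e _).1 h, fun h => ⟨finZeroElim, (e _).2 h⟩⟩

theorem FilterProd.realize_sentence_iff (forest : IsWellFoundedForest X) (hF : F.Prime)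
    (ψ : PosSentence L) :
    PosSentence.Realize (FilterProd D F) ψ ↔ {p | PosSentence.Realize (M p) ψ} ∈ F.sets := by
  rw [← posSet_elim0, ← realize_mk_iff forest hF]
  exact Iff.of_eq (congrArg (PosFormula.Realize ψ Empty.elim) (Subsingleton.elim _ _))

theorem PrimePowerOf.realize_iff {A : Type w} [L.Structure A] (P : PrimePowerOf L A)
    (ψ : PosSentence L) :
    PosSentence.Realize (FilterProd P.sys P.F) ψ ↔ PosSentence.Realize A ψ := by
  rw [FilterProd.realize_sentence_iff P.forest P.prime]
  by_cases h : PosSentence.Realize A ψ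
  · simpa [h] using P.F.univ_mem
  · simpa [h] using P.prime.1

def PosetFilter.pure (p : X) : PosetFilter X where
  sets := {V | IsUpperSet V ∧ p ∈ V}
  upper' _ hV := hV.1
  nonempty' := ⟨univ, isUpperSet_univ, mem_univ p⟩
  mono' _ hV _ hW hVW := ⟨hW, hVW hV.2⟩
  inter' _ hV _ hW := ⟨hV.1.inter hW.1, hV.2, hW.2⟩

theorem PosetFilter.pure_prime (p : X) : (PosetFilter.pure p).Prime :=
  ⟨fun h => h.2, fun _ _ hV hW h => h.2.imp (fun hp => ⟨hV, hp⟩) (fun hp => ⟨hW, hp⟩)⟩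

theorem isWellFoundedForest_of_wellFoundedLT (Y : Type*) [LinearOrder Y] [WellFoundedLT Y] :
    IsWellFoundedForest Y :=
  fun _ => inferInstance

def OrderedSystem.const (Y : Type*) [Preorder Y] (A : Type w) [L.Structure A] :
    OrderedSystem L Y fun _ => A where
  hom _ _ _ := Hom.id L A
  hom_id _ _ := rfl
  hom_comp _ _ _ _ _ _ := rfl

instance PrimePowerOf.instInhabited (A : Type w) [L.Structure A] :
    Inhabited (PrimePowerOf.{u, v, w, x} L A) :=
  ⟨{ X := PUnit
     forest := isWellFoundedForest_of_wellFoundedLT PUnit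
     sys := OrderedSystem.const PUnit A
     F := .pure PUnit.unit
     prime := PosetFilter.pure_prime PUnit.unit }⟩

/-- A positive sentence holds in a structure `M` if and only if it holds in some
(equivalently, every) prime power of `M`. -/
theorem stmt10 (A : Type w) [L.Structure A] (φ : PosSentence L) :
    ((∃ p : PrimePowerOf L A, PosSentence.Realize (FilterProd p.sys p.F) φ) ↔
      PosSentence.Realize A φ) ∧
    ((∀ p : PrimePowerOf L A, PosSentence.Realize (FilterProd p.sys p.F) φ) ↔
      PosSentence.Realize A φ) := by
  simp only [PrimePowerOf.realize_iff, exists_const, forall_const, and_self]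

end PosLogic
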